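/- arXiv:2407.09941 — 2 statements merged into one kernel-verified Lean document; each statement's English description precedes it below -/
import Mathlib

section
/- Let M be a parametric N-quasiseparable L×L real matrix. Then M is rank-characterized N-quasiseparable: for all p, q and all index maps r : Fin p → Fin L, s : Fin q → Fin L, if s(b) < r(a) for all a, b then the p×q matrix (M_{r(a),s(b)})_{a,b} has rank at most N, and likewise if r(a) < s(b) for all a, b then (M_{r(a),s(b)})_{a,b} has rank at most N. -/
open Matrix

/-- `Aprod A i j = A i * A (i-1) * ⋯ * A (j+1)`, the ordered product `A^×_{i:j}`;
it equals the identity when `i = j` (and also, by convention, when `i < j`). -/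
def Aprod {N : ℕ} (A : ℕ → Matrix (Fin N) (Fin N) ℝ) : ℕ → ℕ → Matrix (Fin N) (Fin N) ℝ
  | 0, _ => 1
  | i + 1, j => if j ≤ i then A (i + 1) * Aprod A i j else 1

/-- The parametric `N`-semiseparable `L × L` matrix with parameters `A, b, c`:
`S i j = cᵢᵀ A^×_{i:j} bⱼ` for `i ≥ j` and `0` for `i < j`. -/
def semisep (L : ℕ) {N : ℕ} (A : ℕ → Matrix (Fin N) (Fin N) ℝ)
    (b c : ℕ → Fin N → ℝ) : Matrix (Fin L) (Fin L) ℝ :=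
  Matrix.of fun i j =>
    if (j : ℕ) ≤ (i : ℕ) then c (i : ℕ) ⬝ᵥ (Aprod A (i : ℕ) (j : ℕ)) *ᵥ b (j : ℕ) else 0
/-- The parametric `N`-quasiseparable `L × L` matrix with forward parameters `Af, bf, cf`,
backward parameters `Ab, bb, cb`, and diagonal parameters `δ`. -/
def quasisep (L : ℕ) {N : ℕ} (Af : ℕ → Matrix (Fin N) (Fin N) ℝ) (bf cf : ℕ → Fin N → ℝ)
    (Ab : ℕ → Matrix (Fin N) (Fin N) ℝ) (bb cb : ℕ → Fin N → ℝ) (δ : ℕ → ℝ) :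
    Matrix (Fin L) (Fin L) ℝ :=
  Matrix.of fun i j =>
    if (j : ℕ) < (i : ℕ) then cf (i : ℕ) ⬝ᵥ (Aprod Af (i : ℕ) (j : ℕ)) *ᵥ bf (j : ℕ)
    else if (i : ℕ) = (j : ℕ) then δ (i : ℕ)
    else cb (j : ℕ) ⬝ᵥ (Aprod Ab (j : ℕ) (i : ℕ)) *ᵥ bb (i : ℕ)
/-- Rank characterization of `N`-quasiseparability: every submatrix taken strictly below the
diagonal has rank at most `N`, and every submatrix taken strictly above the diagonal has
rank at most `N`. -/
def RCQuasisep {L : ℕ} (N : ℕ) (M : Matrix (Fin L) (Fin L) ℝ) : Prop :=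
  (∀ (p q : ℕ) (r : Fin p → Fin L) (s : Fin q → Fin L),
      (∀ a b, (s b : ℕ) < (r a : ℕ)) →
      (Matrix.of fun a b => M (r a) (s b)).rank ≤ N) ∧
  (∀ (p q : ℕ) (r : Fin p → Fin L) (s : Fin q → Fin L),
      (∀ a b, (r a : ℕ) < (s b : ℕ)) →
      (Matrix.of fun a b => M (r a) (s b)).rank ≤ N)

theorem Aprod_split {N : ℕ} (A : ℕ → Matrix (Fin N) (Fin N) ℝ) {i j k : ℕ}
    (h1 : j ≤ k) (h2 : k ≤ i) : Aprod A i j = Aprod A i k * Aprod A k j := by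
  induction i with
  | zero =>
    interval_cases k
    simp [Aprod]
  | succ i ih =>
    rcases Nat.eq_or_lt_of_le h2 with h | h
    · subst h
      have : ¬ (i + 1 ≤ i) := by omega
      simp [Aprod, this]
    · have hk : k ≤ i := by omega
      have hj : j ≤ i := le_trans h1 hk
      simp only [Aprod, if_pos hk, if_pos hj, ih hk, Matrix.mul_assoc]

/-- Every parametric `N`-quasiseparable matrix satisfies the rank
characterization of `N`-quasiseparability. -/
theorem quasisep_is_rank_characterized {L N : ℕ}
    (Af : ℕ → Matrix (Fin N) (Fin N) ℝ) (bf cf : ℕ → Fin N → ℝ)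
    (Ab : ℕ → Matrix (Fin N) (Fin N) ℝ) (bb cb : ℕ → Fin N → ℝ) (δ : ℕ → ℝ) :
    RCQuasisep N (quasisep L Af bf cf Ab bb cb δ) := by
  constructor
  · intro p q r s hrs
    set k := Finset.univ.sup (fun b : Fin q => (s b : ℕ)) with hk
    have hfac : (Matrix.of fun a b =>
        quasisep L Af bf cf Ab bb cb δ (r a) (s b)) =
        (Matrix.of fun (a : Fin p) (n : Fin N) => (cf (r a : ℕ) ᵥ* Aprod Af (r a : ℕ) k) n) *
        (Matrix.of fun (n : Fin N) (b : Fin q) => (Aprod Af k (s b : ℕ) *ᵥ bf (s b : ℕ)) n) := by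
      ext a b
      have h1 : (s b : ℕ) ≤ k := Finset.le_sup (f := fun b : Fin q => (s b : ℕ)) (Finset.mem_univ b)
      have h2 : k ≤ (r a : ℕ) := Finset.sup_le fun c _ => Nat.le_of_lt (hrs a c)
      simp only [quasisep, Matrix.mul_apply, Matrix.of_apply, if_pos (hrs a b)]
      rw [Aprod_split Af h1 h2, ← Matrix.mulVec_mulVec, Matrix.dotProduct_mulVec]
      rfl
    rw [hfac]
    calc _ ≤ (Matrix.of fun (a : Fin p) (n : Fin N) =>
            (cf (r a : ℕ) ᵥ* Aprod Af (r a : ℕ) k) n).rank := Matrix.rank_mul_le_left _ _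
      _ ≤ Fintype.card (Fin N) := Matrix.rank_le_card_width _
      _ = N := Fintype.card_fin N
  · intro p q r s hrs
    set k := Finset.univ.sup (fun a : Fin p => (r a : ℕ)) with hk
    have hfac : (Matrix.of fun a b =>
        quasisep L Af bf cf Ab bb cb δ (r a) (s b)) =
        (Matrix.of fun (a : Fin p) (n : Fin N) => (Aprod Ab k (r a : ℕ) *ᵥ bb (r a : ℕ)) n) *
        (Matrix.of fun (n : Fin N) (b : Fin q) => (cb (s b : ℕ) ᵥ* Aprod Ab (s b : ℕ) k) n) := by
      ext a b
      have h1 : (r a : ℕ) ≤ k := Finset.le_sup (f := fun a : Fin p => (r a : ℕ)) (Finset.mem_univ a)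
      have h2 : k ≤ (s b : ℕ) := Finset.sup_le fun c _ => Nat.le_of_lt (hrs c b)
      have hlt := hrs a b
      simp only [quasisep, Matrix.mul_apply, Matrix.of_apply,
        if_neg (Nat.not_lt.mpr (Nat.le_of_lt hlt)), if_neg (Nat.ne_of_lt hlt)]
      rw [Aprod_split Ab h1 h2, ← Matrix.mulVec_mulVec, Matrix.dotProduct_mulVec]
      simp [dotProduct, mul_comm]
    rw [hfac]
    calc _ ≤ (Matrix.of fun (a : Fin p) (n : Fin N) =>
            (Aprod Ab k (r a : ℕ) *ᵥ bb (r a : ℕ)) n).rank := Matrix.rank_mul_le_left _ _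
      _ ≤ Fintype.card (Fin N) := Matrix.rank_le_card_width _
      _ = N := Fintype.card_fin N
end

section
/- Let M be a parametric N-quasiseparable L×L real matrix with diagonal parameters δ_0,…,δ_{L−1}, and let D = diag(δ_0,…,δ_{L−1}). Then there exist parameter families (A'_t, b'_t, c'_t) and (A''_t, b''_t, c''_t) in ℝ^{N×N} × ℝ^N × ℝ^N (t = 0,…,L−1) such that, denoting by S_f and S_b the corresponding parametric N-semiseparable matrices, M = Shift · S_f + J · Shift · S_b · J + D. Equivalently, for every x ∈ ℝ^L, M x = shift(S_f x) + flip(shift(S_b(flip x))) + D x: the action of a quasiseparable matrix decomposes into two semiseparable (state space) passes, one forward and one on the reversed sequence, combined with shifts, flips, and a diagonal term. -/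
open Matrix

/-- The `L × L` down-shift matrix: `Shift i j = 1` iff `i = j + 1`
(so `(Shift *ᵥ x) t = x (t-1)` with zero at `t = 0`). -/
def shiftM (L : ℕ) : Matrix (Fin L) (Fin L) ℝ :=
  Matrix.of fun i j => if (i : ℕ) = (j : ℕ) + 1 then 1 else 0

/-- The `L × L` exchange matrix: `J i j = 1` iff `i + j = L - 1`
(so `J *ᵥ x` reverses `x`). -/
def exchJ (L : ℕ) : Matrix (Fin L) (Fin L) ℝ :=
  Matrix.of fun i j => if (i : ℕ) + (j : ℕ) = L - 1 then 1 else 0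

/-- Right-shift of a sequence by one position, padding with zero at the beginning. -/
def shiftVec {L : ℕ} (x : Fin L → ℝ) : Fin L → ℝ := fun i =>
  if 0 < (i : ℕ) then x ⟨(i : ℕ) - 1, Nat.lt_of_le_of_lt (Nat.sub_le _ _) i.isLt⟩ else 0

/-- Reversal of a sequence. -/
def flipVec {L : ℕ} (x : Fin L → ℝ) : Fin L → ℝ := fun i => x i.rev

/-! The strictly lower part of `M` is a strictly lower semiseparable matrix, and its strictly upper
part is the transpose of one. A strictly lower semiseparable matrix is `Shift · S` for a
semiseparable `S`: peeling the factor `A_i` off `A^×_{i:j}` moves it into `c`. Conjugating by the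
exchange matrix turns the transpose of a strictly lower semiseparable matrix back into a strictly
lower one, with the transition matrices transposed and the time reversed. -/

def strictLowerSemisep (L : ℕ) {N : ℕ} (A : ℕ → Matrix (Fin N) (Fin N) ℝ)
    (b c : ℕ → Fin N → ℝ) : Matrix (Fin L) (Fin L) ℝ :=
  Matrix.of fun i j => if (j : ℕ) < (i : ℕ) then c i ⬝ᵥ Aprod A i j *ᵥ b j else 0

section Aprod

variable {N : ℕ} (A : ℕ → Matrix (Fin N) (Fin N) ℝ)

lemma Aprod_succ {i j : ℕ} (h : j ≤ i) : Aprod A (i + 1) j = A (i + 1) * Aprod A i j := by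
  rw [Aprod, if_pos h]

lemma Aprod_self (i : ℕ) : Aprod A i i = 1 := by
  cases i with
  | zero => rfl
  | succ i => rw [Aprod, if_neg (by omega)]

lemma Aprod_eq_Aprod_succ_mul {i j : ℕ} (h : j < i) :
    Aprod A i j = Aprod A i (j + 1) * A (j + 1) := by
  induction i with
  | zero => omega
  | succ i ih =>
    rcases (Nat.lt_succ_iff.mp h).lt_or_eq with h' | rfl
    · rw [Aprod_succ A h'.le, Aprod_succ A h', ih h', mul_assoc]
    · rw [Aprod_succ A le_rfl, Aprod_self, Aprod_self, one_mul, mul_one]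

lemma Aprod_transpose_rev {K i j : ℕ} (hji : j ≤ i) (hiK : i < K) :
    Aprod (fun t => (A (K - t))ᵀ) i j = (Aprod A (K - 1 - j) (K - 1 - i))ᵀ := by
  induction i with
  | zero =>
    obtain rfl : j = 0 := by omega
    rw [Aprod_self, Aprod_self, transpose_one]
  | succ i ih =>
    rcases hji.lt_or_eq with hji | rfl
    · have hpeel := Aprod_eq_Aprod_succ_mul A (i := K - 1 - j) (j := K - 1 - (i + 1)) (by omega)
      rw [show K - 1 - (i + 1) + 1 = K - (i + 1) by omega] at hpeel
      rw [Aprod_succ _ (by omega), ih (by omega) (by omega), hpeel,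
        show K - 1 - i = K - (i + 1) by omega, transpose_mul]
    · rw [Aprod_self, Aprod_self, transpose_one]

end Aprod

section ShiftExchange

variable {L : ℕ}

lemma shiftM_mulVec (x : Fin L → ℝ) : shiftM L *ᵥ x = shiftVec x := by
  funext i
  simp only [mulVec, dotProduct, shiftM, of_apply, shiftVec, ite_mul, one_mul, zero_mul]
  split_ifs with hi
  · rw [Fintype.sum_eq_single ⟨(i : ℕ) - 1, by omega⟩ fun k hk =>
      if_neg fun h => hk (Fin.ext (by dsimp only; omega)), if_pos (by dsimp only; omega)]
  · exact Finset.sum_eq_zero fun k _ => if_neg (by omega)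

lemma exchJ_mulVec (x : Fin L → ℝ) : exchJ L *ᵥ x = flipVec x := by
  funext i
  simp only [mulVec, dotProduct, exchJ, of_apply, flipVec, ite_mul, one_mul, zero_mul]
  rw [Fintype.sum_eq_single i.rev fun k hk =>
    if_neg fun h => hk (Fin.ext (by rw [Fin.val_rev]; omega)), if_pos (by rw [Fin.val_rev]; omega)]

lemma shiftM_mul_apply (X : Matrix (Fin L) (Fin L) ℝ) (i j : Fin L) :
    (shiftM L * X) i j = shiftVec (fun k => X k j) i := by
  rw [← shiftM_mulVec]; rfl

lemma transpose_exchJ : (exchJ L)ᵀ = exchJ L := by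
  ext i j
  simp only [transpose_apply, exchJ, of_apply, add_comm]

lemma exchJ_mul_apply (X : Matrix (Fin L) (Fin L) ℝ) (i j : Fin L) :
    (exchJ L * X) i j = X i.rev j :=
  congrFun (exchJ_mulVec fun k => X k j) i

lemma exchJ_mul_mul_exchJ_apply (X : Matrix (Fin L) (Fin L) ℝ) (i j : Fin L) :
    (exchJ L * X * exchJ L) i j = X i.rev j.rev := by
  rw [← transpose_apply (exchJ L * X * exchJ L), transpose_mul, transpose_exchJ, exchJ_mul_apply,
    transpose_apply, exchJ_mul_apply]

end ShiftExchange

section Semisep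

variable {L N : ℕ} (A : ℕ → Matrix (Fin N) (Fin N) ℝ) (b c : ℕ → Fin N → ℝ)

lemma shiftM_mul_semisep :
    shiftM L * semisep L A b (fun t => (A (t + 1))ᵀ *ᵥ c (t + 1)) =
      strictLowerSemisep L A b c := by
  ext i j
  rw [shiftM_mul_apply]
  simp only [shiftVec, semisep, strictLowerSemisep, of_apply]
  obtain ⟨i, hi⟩ := i
  cases i with
  | zero => simp
  | succ i =>
    simp only [Nat.add_sub_cancel, Nat.lt_succ_iff, Nat.zero_le, ↓reduceIte]
    split_ifs with hji
    · rw [Aprod_succ A hji, ← mulVec_mulVec, mulVec_transpose]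
      exact (dotProduct_mulVec _ _ _).symm
    · rfl

lemma transpose_strictLowerSemisep :
    (strictLowerSemisep L A b c)ᵀ =
      exchJ L * strictLowerSemisep L (fun t => (A (L - t))ᵀ) (fun t => c (L - 1 - t))
        (fun t => b (L - 1 - t)) * exchJ L := by
  ext i j
  rw [exchJ_mul_mul_exchJ_apply]
  simp only [transpose_apply, strictLowerSemisep, of_apply, Fin.val_rev]
  have hi := i.isLt
  have hj := j.isLt
  split_ifs
  · rw [Aprod_transpose_rev A (by omega) (by omega), mulVec_transpose,
      show L - 1 - (L - (i + 1)) = i by omega, show L - 1 - (L - (j + 1)) = j by omega,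
      dotProduct_comm (b i), ← dotProduct_mulVec, dotProduct_comm]
  · omega
  · omega
  · rfl

end Semisep

lemma quasisep_eq_strictLowerSemisep_add_transpose_add_diagonal {L N : ℕ}
    (Af : ℕ → Matrix (Fin N) (Fin N) ℝ) (bf cf : ℕ → Fin N → ℝ)
    (Ab : ℕ → Matrix (Fin N) (Fin N) ℝ) (bb cb : ℕ → Fin N → ℝ) (δ : ℕ → ℝ) :
    quasisep L Af bf cf Ab bb cb δ =
      strictLowerSemisep L Af bf cf + (strictLowerSemisep L Ab bb cb)ᵀ +
        diagonal fun i : Fin L => δ i := by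
  ext i j
  simp only [quasisep, strictLowerSemisep, Matrix.add_apply, transpose_apply, diagonal_apply,
    of_apply, Fin.ext_iff]
  split_ifs <;> first | omega | simp_all

lemma shiftM_mul_add_exchJ_mul_add_diagonal_mulVec {L : ℕ}
    (Sf Sb : Matrix (Fin L) (Fin L) ℝ) (d x : Fin L → ℝ) :
    (shiftM L * Sf + exchJ L * (shiftM L * (Sb * exchJ L)) + diagonal d) *ᵥ x =
      shiftVec (Sf *ᵥ x) + flipVec (shiftVec (Sb *ᵥ flipVec x)) + fun i => d i * x i := by
  simp only [add_mulVec, ← mulVec_mulVec, shiftM_mulVec, exchJ_mulVec]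
  exact congrArg _ (funext (mulVec_diagonal d x))

/-- The action of a parametric `N`-quasiseparable matrix decomposes into
two semiseparable (state space) passes, one forward and one on the reversed sequence,
combined with shifts, flips, and the diagonal term:
`M = Shift * S_f + J * Shift * S_b * J + D`, i.e.
`M x = shift (S_f x) + flip (shift (S_b (flip x))) + D x` for all `x`. -/
theorem quasisep_eq_two_semisep_passes {L N : ℕ}
    (Af : ℕ → Matrix (Fin N) (Fin N) ℝ) (bf cf : ℕ → Fin N → ℝ)
    (Ab : ℕ → Matrix (Fin N) (Fin N) ℝ) (bb cb : ℕ → Fin N → ℝ) (δ : ℕ → ℝ) :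
    ∃ (A' : ℕ → Matrix (Fin N) (Fin N) ℝ) (b' c' : ℕ → Fin N → ℝ)
      (A'' : ℕ → Matrix (Fin N) (Fin N) ℝ) (b'' c'' : ℕ → Fin N → ℝ),
      quasisep L Af bf cf Ab bb cb δ =
        shiftM L * semisep L A' b' c' +
          exchJ L * (shiftM L * (semisep L A'' b'' c'' * exchJ L)) +
          Matrix.diagonal (fun i : Fin L => δ (i : ℕ)) ∧
      ∀ x : Fin L → ℝ,
        quasisep L Af bf cf Ab bb cb δ *ᵥ x =
          shiftVec (semisep L A' b' c' *ᵥ x) +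
            flipVec (shiftVec (semisep L A'' b'' c'' *ᵥ flipVec x)) +
            fun i : Fin L => δ (i : ℕ) * x i := by
  have hM : quasisep L Af bf cf Ab bb cb δ =
      shiftM L * semisep L Af bf (fun t => (Af (t + 1))ᵀ *ᵥ cf (t + 1)) +
        exchJ L * (shiftM L * (semisep L (fun t => (Ab (L - t))ᵀ) (fun t => cb (L - 1 - t))
          (fun t => Ab (L - (t + 1)) *ᵥ bb (L - 1 - (t + 1))) * exchJ L)) +
        diagonal fun i : Fin L => δ i := by
    rw [quasisep_eq_strictLowerSemisep_add_transpose_add_diagonal, transpose_strictLowerSemisep,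
      ← shiftM_mul_semisep, ← shiftM_mul_semisep, Matrix.mul_assoc, Matrix.mul_assoc]
    simp only [transpose_transpose]
  refine ⟨_, _, _, _, _, _, hM, fun x => ?_⟩
  rw [hM, shiftM_mul_add_exchJ_mul_add_diagonal_mulVec]
end
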